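/- Let n, d be positive integers and let W be a word over a linearly ordered finite alphabet. If W is 4nd-divisible in the tail sense, then either W is n-divisible in the ordinary sense or W contains a subword of the form u^d for some nonempty word u. Consequently, if W is not n-divisible in the ordinary sense and contains no d-th power of a subword, then W is not 4nd-divisible in the tail sense. -/

import Mathlib

/-!
Let `q 0 < q 1 < ⋯` be the starting positions of strictly decreasing tails of `W` and
`k = d - 1`; cut `W` at `q 0, q k, q (2k), …`. Consecutive pieces decrease because the tail at
`q (j + k)` is smaller than the prefix of length `q (j + k) - q j` of the tail at `q j`:
otherwise all `k + 1` tails in between share that prefix, and at a gap `g` between consecutive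
positions with `k * g ≤ q (j + k) - q j` the word `W` has period `g` along a stretch of length
at least `(k + 1) * g`, i.e. contains a `d`-th power.
So `(n - 1)(d - 1) + 1` decreasing tails already suffice.
-/

/-- `W` is `m`-divisible in the ordinary sense. -/
def IsNDivisible {α : Type*} [LinearOrder α] (m : ℕ) (W : List α) : Prop :=
  ∃ (v : List α) (us : List (List α)), us.length = m ∧ (∀ u ∈ us, u ≠ []) ∧
    W = v ++ us.flatten ∧ us.Chain' (fun a b => b < a)

/-- `W` is `m`-divisible in the tail sense: there are `m` suffixes of `W`, with strictly
increasing starting positions, that are strictly lexicographically decreasing. -/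
def IsTailNDivisible {α : Type*} [LinearOrder α] (m : ℕ) (W : List α) : Prop :=
  ∃ p : Fin m → ℕ, StrictMono p ∧ (∀ i, p i < W.length) ∧
    ∀ i j : Fin m, i < j → W.drop (p j) < W.drop (p i)

open List Set

namespace List

variable {α : Type*}

theorem flatten_replicate_succ_prefix_of_take_eq {B v : List α} (e : ℕ)
    (h : v.take (e * B.length) = (B ++ v).take (e * B.length)) :
    (replicate (e + 1) B).flatten <+: B ++ v := by
  induction e generalizing v with
  | zero => simp
  | succ e ih =>
    rw [Nat.succ_mul, add_comm, take_length_add_append] at h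
    obtain ⟨v', rfl⟩ : B <+: v := ((prefix_append B _).trans (h ▸ take_prefix _ v))
    rw [take_length_add_append, append_right_inj] at h
    rw [replicate_succ, flatten_cons]
    exact prefix_append_right_inj B |>.mpr (ih h)

variable [LinearOrder α]

theorem take_le_take_of_le {u v : List α} (h : u ≤ v) (k : ℕ) : u.take k ≤ v.take k := by
  obtain hlt | rfl := lt_or_eq_of_le h
  · clear h
    change Lex (· < · : α → α → Prop) u v at hlt
    induction hlt generalizing k with
    | nil => rw [take_nil]; exact not_lt.mp (not_lt_nil _)
    | rel hab =>
      cases k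
      · simp
      · exact le_of_lt (Lex.rel hab)
    | cons _ ih =>
      cases k
      · simp
      · exact cons_le_cons _ (ih _)
  · exact le_rfl

theorem lt_take_of_lt_of_take_ne {u v : List α} (h : v < u) {k : ℕ}
    (hk : v.take k ≠ u.take k) : v < u.take k := by
  change Lex (· < · : α → α → Prop) v u at h
  induction h generalizing k with
  | nil =>
    cases k
    · simp at hk
    · exact nil_lt_cons _ _
  | rel h =>
    cases k
    · simp at hk
    · exact Lex.rel h
  | cons _ ih =>
    cases k
    · simp at hk
    · exact Lex.cons (ih fun h => hk (by simp [h]))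

theorem take_eq_of_le_of_le {a b c : List α} {k : ℕ} (hab : b ≤ a) (hcb : c ≤ b)
    (hac : a.take k = c.take k) : b.take k = a.take k :=
  (take_le_take_of_le hab k).antisymm (hac ▸ take_le_take_of_le hcb k)

end List

theorem exists_mul_sub_le_sub (s : ℕ → ℤ) {k : ℕ} (hk : 0 < k) :
    ∃ i < k, k * (s (i + 1) - s i) ≤ s k - s 0 := by
  have hsum : ∑ i ∈ Finset.range k, (k : ℤ) * (s (i + 1) - s i)
      = ∑ _i ∈ Finset.range k, (s k - s 0) := by
    rw [← Finset.mul_sum, Finset.sum_range_sub, Finset.sum_const, Finset.card_range, nsmul_eq_mul]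
  simpa using Finset.exists_le_of_sum_le (Finset.nonempty_range_iff.mpr hk.ne') hsum.le

section TailDivisibility

variable {α : Type*} [LinearOrder α] {W : List α}

theorem drop_lt_take_drop_of_powerFree {s : ℕ → ℕ} {k : ℕ} (hk : 0 < k)
    (hs : StrictMonoOn s (Iic k)) (ht : StrictAntiOn (fun i => W.drop (s i)) (Iic k))
    (hpow : ¬ ∃ u : List α, u ≠ [] ∧ (replicate (k + 1) u).flatten <:+: W) :
    W.drop (s k) < (W.drop (s 0)).take (s k - s 0) := by
  refine lt_take_of_lt_of_take_ne (ht (by simp) (by simp) hk) ?_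
  intro (heq : (W.drop (s k)).take (s k - s 0) = (W.drop (s 0)).take (s k - s 0))
  refine hpow ?_
  obtain ⟨i, hik, hgap⟩ := exists_mul_sub_le_sub (fun i => (s i : ℤ)) hk
  have hi : i ∈ Iic k := by simp only [mem_Iic]; omega
  have hi' : i + 1 ∈ Iic k := by simp only [mem_Iic]; omega
  have hmono : s i < s (i + 1) := hs hi hi' (Nat.lt_succ_self i)
  have hgap' : k * (s (i + 1) - s i) ≤ s k - s 0 := by
    have : s 0 ≤ s k := hs.monotoneOn (by simp) (by simp) (by omega)
    zify [hmono.le, this]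
    exact hgap
  have hsqueeze (j : ℕ) (hj : j ∈ Iic k) :
      (W.drop (s j)).take (s k - s 0) = (W.drop (s 0)).take (s k - s 0) :=
    take_eq_of_le_of_le (ht.antitoneOn (by simp) hj (by simp)) (ht.antitoneOn hj (by simp) hj)
      heq.symm
  set B := (W.drop (s i)).take (s (i + 1) - s i)
  have hsplit : W.drop (s i) = B ++ W.drop (s (i + 1)) := by
    rw [← take_append_drop (s (i + 1) - s i) (W.drop (s i)), drop_drop,
      Nat.add_sub_cancel' hmono.le]
  have hB : B ≠ [] := by
    rintro hB
    have : W.drop (s (i + 1)) < W.drop (s i) := ht hi hi' (Nat.lt_succ_self i)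
    rw [hsplit, hB, nil_append] at this
    exact lt_irrefl _ this
  have hperiod : (W.drop (s (i + 1))).take (k * B.length)
      = (B ++ W.drop (s (i + 1))).take (k * B.length) := by
    have hlen : k * B.length ≤ s k - s 0 :=
      (Nat.mul_le_mul_left k (length_take_le _ _)).trans hgap'
    rw [← hsplit, ← min_eq_left hlen, ← take_take, ← take_take (l := W.drop (s i)),
      hsqueeze (i + 1) hi', hsqueeze i hi]
  refine ⟨B, hB, ?_⟩
  exact (flatten_replicate_succ_prefix_of_take_eq k hperiod).isInfix.trans
    (hsplit ▸ (drop_suffix (s i) W).isInfix)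

theorem exists_chain_of_drop_lt_take_drop {r : ℕ → ℕ} (k : ℕ)
    (hstep : ∀ i < k, W.drop (r (i + 1)) < (W.drop (r i)).take (r (i + 1) - r i))
    (hlast : r k < W.length) :
    ∃ us : List (List α), us.length = k + 1 ∧ (∀ u ∈ us, u ≠ []) ∧
      us.flatten = W.drop (r 0) ∧ us.IsChain (fun a b => b < a) := by
  induction k generalizing r with
  | zero => exact ⟨[W.drop (r 0)], rfl, by simpa using hlast, by simp, isChain_singleton _⟩
  | succ k ih =>
    obtain ⟨us, hlen, hne, hflat, hchain⟩ :=
      ih (r := fun i => r (i + 1)) (fun i hi => hstep (i + 1) (by omega)) hlast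
    set c := (W.drop (r 0)).take (r 1 - r 0)
    have hc : W.drop (r 1) < c := hstep 0 (by omega)
    have hr : r 0 ≤ r 1 := by
      by_contra! h
      simp [c, Nat.sub_eq_zero_of_le h.le] at hc
    refine ⟨c :: us, by simp [hlen], ?_, ?_, isChain_cons.mpr ⟨?_, hchain⟩⟩
    · rintro u (_ | ⟨_, hu⟩)
      exacts [fun h => not_lt_nil _ (h ▸ hc), hne u hu]
    · rw [flatten_cons, hflat, ← Nat.add_sub_cancel' hr, ← drop_drop, take_append_drop]
    · intro y hy
      obtain ⟨tl, rfl⟩ := head?_eq_some_iff.mp hy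
      have hy_le : y ≤ W.drop (r 1) := hflat ▸ not_lt.mp (prefix_append y tl.flatten).le
      exact hy_le.trans_lt hc

theorem isNDivisible_succ_of_drop_lt_take_drop {r : ℕ → ℕ} (k : ℕ)
    (hstep : ∀ i < k, W.drop (r (i + 1)) < (W.drop (r i)).take (r (i + 1) - r i))
    (hlast : r k < W.length) : IsNDivisible (k + 1) W := by
  obtain ⟨us, hlen, hne, hflat, hchain⟩ := exists_chain_of_drop_lt_take_drop k hstep hlast
  exact ⟨W.take (r 0), us, hlen, hne, by rw [hflat, take_append_drop], hchain⟩

theorem IsTailNDivisible.ne_nil {m : ℕ} (h : IsTailNDivisible m W) (hm : 0 < m) : W ≠ [] := by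
  obtain ⟨p, -, hlen, -⟩ := h
  exact ne_nil_of_length_pos ((Nat.zero_le _).trans_lt (hlen ⟨0, hm⟩))

theorem IsTailNDivisible.exists_strictAntiOn {m : ℕ} (h : IsTailNDivisible m W) :
    ∃ q : ℕ → ℕ, StrictMonoOn q (Iio m) ∧ (∀ i < m, q i < W.length) ∧
      StrictAntiOn (fun i => W.drop (q i)) (Iio m) := by
  obtain ⟨p, hp, hlen, hdrop⟩ := h
  refine ⟨fun i => if hi : i < m then p ⟨i, hi⟩ else 0, ?_, ?_, ?_⟩
  · intro i hi j hj hij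
    simp only [mem_Iio] at hi hj
    simpa [hi, hj] using hp (show (⟨i, hi⟩ : Fin m) < ⟨j, hj⟩ from hij)
  · intro i hi
    simpa [hi] using hlen ⟨i, hi⟩
  · intro i hi j hj hij
    simp only [mem_Iio] at hi hj
    simpa [hi, hj] using hdrop ⟨i, hi⟩ ⟨j, hj⟩ hij

theorem IsTailNDivisible.isNDivisible_of_powerFree {n k m : ℕ} (h : IsTailNDivisible m W)
    (hk : 0 < k) (hm : n * k < m)
    (hpow : ¬ ∃ u : List α, u ≠ [] ∧ (replicate (k + 1) u).flatten <:+: W) :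
    IsNDivisible (n + 1) W := by
  obtain ⟨q, hq, hlen, ht⟩ := h.exists_strictAntiOn
  refine isNDivisible_succ_of_drop_lt_take_drop (r := fun i => q (i * k)) n (fun i hi => ?_)
    (hlen _ hm)
  have hsub : ∀ j ∈ Iic k, i * k + j ∈ Iio m := fun j hj => by
    simp only [mem_Iic, mem_Iio] at hj ⊢
    nlinarith
  have := drop_lt_take_drop_of_powerFree (s := fun j => q (i * k + j)) hk
    (fun a ha b hb hab => hq (hsub a ha) (hsub b hb) (by omega))
    (fun a ha b hb hab => ht (hsub a ha) (hsub b hb) (by omega)) hpow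
  simpa [add_mul] using this

end TailDivisibility

theorem stmt_3_general {α : Type*} [LinearOrder α] (n d : ℕ) (hn : 0 < n) (hd : 0 < d)
    (W : List α) :
    (IsTailNDivisible (4 * n * d) W →
      IsNDivisible n W ∨ ∃ u : List α, u ≠ [] ∧ (List.replicate d u).flatten <:+: W) ∧
    ((¬ IsNDivisible n W ∧ ¬ ∃ u : List α, u ≠ [] ∧ (List.replicate d u).flatten <:+: W) →
      ¬ IsTailNDivisible (4 * n * d) W) := by
  have key : IsTailNDivisible (4 * n * d) W →
      IsNDivisible n W ∨ ∃ u : List α, u ≠ [] ∧ (List.replicate d u).flatten <:+: W := by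
    intro h
    rw [or_iff_not_imp_right]
    intro hpow
    obtain ⟨n, rfl⟩ := Nat.exists_eq_add_one_of_ne_zero hn.ne'
    obtain ⟨k, rfl⟩ := Nat.exists_eq_add_one_of_ne_zero hd.ne'
    rcases Nat.eq_zero_or_pos k with rfl | hk
    · exact absurd ⟨W, h.ne_nil (by positivity), by simp⟩ hpow
    · exact h.isNDivisible_of_powerFree hk (by nlinarith) hpow
  exact ⟨key, fun ⟨hdiv, hpow⟩ h => (key h).elim hdiv hpow⟩

/-- Lemma: a `4nd`-divisible (in tail sense) word is `n`-divisible in the ordinary sense or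
contains a `d`-th power; consequently a word that is not `n`-divisible in the ordinary sense
and contains no `d`-th power is not `4nd`-divisible in the tail sense. -/
theorem stmt_3 {α : Type*} [Fintype α] [LinearOrder α] (n d : ℕ) (hn : 0 < n) (hd : 0 < d)
    (W : List α) :
    (IsTailNDivisible (4 * n * d) W →
      IsNDivisible n W ∨ ∃ u : List α, u ≠ [] ∧ (List.replicate d u).flatten <:+: W) ∧
    ((¬ IsNDivisible n W ∧ ¬ ∃ u : List α, u ≠ [] ∧ (List.replicate d u).flatten <:+: W) →
      ¬ IsTailNDivisible (4 * n * d) W) :=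
  stmt_3_general n d hn hd W
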